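/- Let G be an almost simple group with socle S, let K be a permutation group with G* ≤ K ≤ Sym(G), let L be the minimal block of K and K_𝔏 the subgroup of all elements of K mapping each right coset of L to itself. Let X and X' be right cosets of L such that some element of K_𝔏 fixes one of X, X' pointwise but does not fix the other pointwise (i.e., X and X' are not equivalent). Then K_𝔏 acts transitively on X × X': for all a, c ∈ X and all b, d ∈ X' there exists k ∈ K_𝔏 with a^k = c and b^k = d. -/

import Mathlib

/-!
Since `K` contains all left translations and all conjugations of `G`, a `K`-block containing `1`
is a normal subgroup of `G`; if it is nontrivial it meets the simple group `S` nontrivially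
(otherwise it would centralize `S`), so it contains `S`. Hence `S ≤ L ⊴ G`.

Let `f ∈ K_𝔏` fix `X` pointwise but not `X' = L * b`. For every coset `Z` whose pointwise
stabilizer in `K_𝔏` moves a point of `X'`, the `m` with `m * b` in the orbit of `b` under that
stabilizer form a nontrivial subgroup normalized by `L`, so it contains `S`. The common part of
these orbits is a `K`-block, because `K` permutes the cosets of `L` and conjugates the
stabilizers into each other; translated by `b⁻¹` it contains `1` and `S`, hence the minimal
block `L`. So the pointwise stabilizer of `X` is transitive on `X'`, and a left translation by an
element of `L` makes `K_𝔏` transitive on `X × X'`.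
-/

/-- The subgroup of `Sym(A)` consisting of the right translations `x ↦ x * g`. -/
def rightMuls (A : Type*) [Group A] : Subgroup (Equiv.Perm A) :=
  (MulAction.toPermHom Aᵐᵒᵖ A).range

/-- The holomorph of `A`, i.e. the normalizer in `Sym(A)` of the group of right
translations. -/
def Hol (A : Type*) [Group A] : Subgroup (Equiv.Perm A) :=
  Subgroup.normalizer ((rightMuls A : Set (Equiv.Perm A)))

/-- `D(2,A)`: the subgroup of `Sym(A)` generated by `Hol(A)` and the inversion
permutation `g ↦ g⁻¹`. -/
def D2 (A : Type*) [Group A] : Subgroup (Equiv.Perm A) :=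
  Hol A ⊔ Subgroup.closure {Equiv.inv A}

/-- The homomorphism `H × H →* Sym(A)` sending `(h₁, h₂)` to `x ↦ h₁ * x * h₂⁻¹`. -/
def biTransHom {A : Type*} [Group A] (H : Subgroup A) : H × H →* Equiv.Perm A where
  toFun p := (Equiv.mulLeft (p.1 : A)).trans (Equiv.mulRight ((p.2 : A)⁻¹))
  map_one' := by ext x; simp
  map_mul' p q := by ext x; simp [mul_assoc]

/-- `H*`: the subgroup of `Sym(A)` of all permutations `x ↦ h₁ * x * h₂` with
`h₁, h₂ ∈ H`. -/
def starGroup {A : Type*} [Group A] (H : Subgroup A) : Subgroup (Equiv.Perm A) :=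
  (biTransHom H).range

/-- The automorphism group of the Cayley graph `Cay(A, X)`: all permutations `f`
of `A` such that `h * g⁻¹ ∈ X ↔ f h * (f g)⁻¹ ∈ X` for all `g, h`. -/
def cayAut {A : Type*} [Group A] (X : Set A) : Subgroup (Equiv.Perm A) where
  carrier := {f : Equiv.Perm A | ∀ g h : A, h * g⁻¹ ∈ X ↔ f h * (f g)⁻¹ ∈ X}
  one_mem' := by intro g h; simp
  mul_mem' := by
    intro a b ha hb g h
    simpa [Equiv.Perm.mul_apply] using (hb g h).trans (ha (b g) (b h))
  inv_mem' := by
    intro a ha g h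
    simpa using (ha (a⁻¹ g) (a⁻¹ h)).symm

/-- A `K`-block: a subset `B` such that every `k ∈ K` either fixes `B` setwise or
moves it to a disjoint set. -/
def IsBlock {A : Type*} [Group A] (K : Subgroup (Equiv.Perm A)) (B : Set A) : Prop :=
  ∀ k ∈ K, (k : Equiv.Perm A) '' B = B ∨ ((k : Equiv.Perm A) '' B) ∩ B = ∅

/-- The minimal block of `K`: the intersection of all `K`-blocks of size at least 2
containing the identity. -/
def minBlock {A : Type*} [Group A] (K : Subgroup (Equiv.Perm A)) : Set A :=
  ⋂₀ {B : Set A | IsBlock K B ∧ (1 : A) ∈ B ∧ 2 ≤ B.ncard}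

/-- The right coset `L * g`. -/
def rcoset {A : Type*} [Group A] (L : Subgroup A) (g : A) : Set A :=
  {x : A | x * g⁻¹ ∈ L}

/-- `K_𝔏`: the subgroup of all elements of `K` mapping each right coset of `L` to
itself. -/
def stabCosets {A : Type*} [Group A] (K : Subgroup (Equiv.Perm A)) (L : Subgroup A) :
    Subgroup (Equiv.Perm A) where
  carrier := {f : Equiv.Perm A | f ∈ K ∧ ∀ x : A, f x * x⁻¹ ∈ L}
  one_mem' := ⟨K.one_mem, fun x => by simpa using L.one_mem⟩
  mul_mem' := by
    rintro a b ⟨haK, ha⟩ ⟨hbK, hb⟩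
    refine ⟨K.mul_mem haK hbK, fun x => ?_⟩
    have := L.mul_mem (ha (b x)) (hb x)
    simpa [Equiv.Perm.mul_apply, mul_assoc] using this
  inv_mem' := by
    rintro a ⟨haK, ha⟩
    refine ⟨K.inv_mem haK, fun x => ?_⟩
    have := L.inv_mem (ha (a⁻¹ x))
    simpa [mul_inv_rev] using this

/-- Two subsets `X`, `X'` are equivalent (w.r.t. `K` and `L`) if every element of
`K_𝔏` fixes `X` pointwise iff it fixes `X'` pointwise. -/
def cosetEquiv {A : Type*} [Group A] (K : Subgroup (Equiv.Perm A)) (L : Subgroup A)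
    (X X' : Set A) : Prop :=
  ∀ f ∈ stabCosets K L,
    ((∀ x ∈ X, (f : Equiv.Perm A) x = x) ↔ (∀ x ∈ X', (f : Equiv.Perm A) x = x))

/-- The union `U` of the right cosets of `L` that are equivalent to `L`. -/
def Uset {A : Type*} [Group A] (K : Subgroup (Equiv.Perm A)) (L : Subgroup A) : Set A :=
  {x : A | cosetEquiv K L (L : Set A) (rcoset L x)}

/-- A permutation group `K` is 2-closed if it contains every permutation `f` such
that every pair of points can be moved as by `f` by some element of `K`. -/
def Is2Closed {A : Type*} [Group A] (K : Subgroup (Equiv.Perm A)) : Prop :=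
  ∀ f : Equiv.Perm A, (∀ a b : A, ∃ k ∈ K, (k : Equiv.Perm A) a = f a ∧ k b = f b) → f ∈ K

open scoped Pointwise

theorem Subgroup.smul_set_eq_image {α : Type*} {K : Subgroup (Equiv.Perm α)} (k : K)
    (B : Set α) : k • B = (k : Equiv.Perm α) '' B :=
  Set.image_smul.symm

section Blocks

variable {G : Type*} [Group G] {K : Subgroup (Equiv.Perm G)} {B : Set G}

theorem isBlock_iff_mulAction_isBlock : IsBlock K B ↔ MulAction.IsBlock K B := by
  rw [MulAction.isBlock_iff_smul_eq_or_disjoint, Subtype.forall]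
  simp only [IsBlock, Subgroup.smul_set_eq_image, Set.disjoint_iff_inter_eq_empty]

theorem IsBlock.sInter {𝓑 : Set (Set G)} (h𝓑 : ∀ B ∈ 𝓑, IsBlock K B) : IsBlock K (⋂₀ 𝓑) := by
  rw [Set.sInter_eq_iInter, isBlock_iff_mulAction_isBlock]
  exact MulAction.IsBlock.iInter fun B => isBlock_iff_mulAction_isBlock.1 (h𝓑 B B.2)

theorem IsBlock.image (hB : IsBlock K B) {k : Equiv.Perm G} (hk : k ∈ K) :
    IsBlock K (k '' B) := by
  have := (isBlock_iff_mulAction_isBlock.1 hB).translate (⟨k, hk⟩ : K)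
  rwa [Subgroup.smul_set_eq_image, ← isBlock_iff_mulAction_isBlock] at this

theorem IsBlock.image_eq_image (hB : IsBlock K B) {k₁ k₂ : Equiv.Perm G} (hk₁ : k₁ ∈ K)
    (hk₂ : k₂ ∈ K) {x : G} (hx₁ : x ∈ k₁ '' B) (hx₂ : x ∈ k₂ '' B) : k₁ '' B = k₂ '' B := by
  have := (isBlock_iff_mulAction_isBlock.1 hB).smul_eq_smul_of_nonempty
    (g₁ := ⟨k₁, hk₁⟩) (g₂ := ⟨k₂, hk₂⟩)
  simp only [Subgroup.smul_set_eq_image] at this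
  exact this ⟨x, hx₁, hx₂⟩

theorem IsBlock.image_eq_of_mem (hB : IsBlock K B) {k : Equiv.Perm G} (hk : k ∈ K) {x : G}
    (hx : x ∈ B) (hkx : k x ∈ B) : k '' B = B :=
  (hB k hk).resolve_right (Set.nonempty_iff_ne_empty.1 ⟨k x, Set.mem_image_of_mem k hx, hkx⟩)

end Blocks

section Translations

variable {G : Type*} [Group G] {K : Subgroup (Equiv.Perm G)}

theorem mulLeft_mem_of_starGroup_le (hGK : starGroup (⊤ : Subgroup G) ≤ K) (a : G) :
    Equiv.mulLeft a ∈ K :=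
  hGK ⟨(⟨a, trivial⟩, 1), by ext x; simp [biTransHom]⟩

theorem mulRight_mem_of_starGroup_le (hGK : starGroup (⊤ : Subgroup G) ≤ K) (a : G) :
    Equiv.mulRight a ∈ K :=
  hGK ⟨(1, ⟨a⁻¹, trivial⟩), by ext x; simp [biTransHom]⟩

variable {B : Set G}

theorem IsBlock.mul_mem (hGK : starGroup (⊤ : Subgroup G) ≤ K) (hB : IsBlock K B)
    (h1 : (1 : G) ∈ B) {a b : G} (ha : a ∈ B) (hb : b ∈ B) : a * b ∈ B := by
  rw [← hB.image_eq_of_mem (mulLeft_mem_of_starGroup_le hGK a) h1 (by simpa using ha)]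
  exact ⟨b, hb, rfl⟩

theorem IsBlock.inv_mem (hGK : starGroup (⊤ : Subgroup G) ≤ K) (hB : IsBlock K B)
    (h1 : (1 : G) ∈ B) {a : G} (ha : a ∈ B) : a⁻¹ ∈ B := by
  rw [← hB.image_eq_of_mem (mulLeft_mem_of_starGroup_le hGK a⁻¹) ha (by simpa using h1)]
  exact ⟨1, h1, by simp⟩

theorem IsBlock.conj_mem (hGK : starGroup (⊤ : Subgroup G) ≤ K) (hB : IsBlock K B)
    (h1 : (1 : G) ∈ B) {a : G} (ha : a ∈ B) (g : G) : g * a * g⁻¹ ∈ B := by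
  have hconj : Equiv.mulLeft g * Equiv.mulRight g⁻¹ ∈ K :=
    K.mul_mem (mulLeft_mem_of_starGroup_le hGK g) (mulRight_mem_of_starGroup_le hGK g⁻¹)
  rw [← hB.image_eq_of_mem hconj h1 (by simpa using h1)]
  exact ⟨a, ha, by simp [mul_assoc]⟩

def IsBlock.toSubgroup (hGK : starGroup (⊤ : Subgroup G) ≤ K) (hB : IsBlock K B)
    (h1 : (1 : G) ∈ B) : Subgroup G where
  carrier := B
  one_mem' := h1
  mul_mem' := hB.mul_mem hGK h1
  inv_mem' := hB.inv_mem hGK h1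

theorem IsBlock.toSubgroup_normal (hGK : starGroup (⊤ : Subgroup G) ≤ K) (hB : IsBlock K B)
    (h1 : (1 : G) ∈ B) : (hB.toSubgroup hGK h1).Normal :=
  ⟨fun _ ha g => hB.conj_mem hGK h1 ha g⟩

end Translations

section Socle

variable {G : Type*} [Group G] {S : Subgroup G}

theorem le_of_conj_mem_of_ne_bot (hSnormal : S.Normal) (hSsimple : IsSimpleGroup S)
    (hScent : ∀ g : G, (∀ s ∈ S, g * s = s * g) → g = 1) {M : Subgroup G}
    (hM : ∀ s ∈ S, ∀ m ∈ M, s * m * s⁻¹ ∈ M) (hMbot : M ≠ ⊥) : S ≤ M := by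
  have hnormal : (M.subgroupOf S).Normal :=
    ⟨fun n hn s => by simpa [Subgroup.mem_subgroupOf] using hM s s.2 n hn⟩
  refine (hSsimple.eq_bot_or_eq_top_of_normal _ hnormal).elim (fun hbot => ?_)
    Subgroup.subgroupOf_eq_top.1
  refine absurd ((Subgroup.eq_bot_iff_forall M).2 fun m hm => hScent m fun s hs => ?_) hMbot
  have hcomm : m * (s * m⁻¹ * s⁻¹) = 1 := by
    refine Subgroup.disjoint_def.1 (Subgroup.subgroupOf_eq_bot.1 hbot)
      (M.mul_mem hm (hM s hs _ (M.inv_mem hm))) ?_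
    simpa only [← mul_assoc] using S.mul_mem (hSnormal.conj_mem s hs m) (S.inv_mem hs)
  calc m * s = m * (s * m⁻¹ * s⁻¹) * (s * m) := by group
    _ = s * m := by rw [hcomm, one_mul]

variable {K : Subgroup (Equiv.Perm G)} {B : Set G}

theorem IsBlock.socle_subset (hGK : starGroup (⊤ : Subgroup G) ≤ K)
    (hSnormal : S.Normal) (hSsimple : IsSimpleGroup S)
    (hScent : ∀ g : G, (∀ s ∈ S, g * s = s * g) → g = 1) (hB : IsBlock K B)
    (h1 : (1 : G) ∈ B) (h2 : 2 ≤ B.ncard) : (S : Set G) ⊆ B := by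
  refine le_of_conj_mem_of_ne_bot (M := hB.toSubgroup hGK h1) hSnormal hSsimple hScent
    (fun s _ m hm => (hB.toSubgroup_normal hGK h1).conj_mem m hm s) fun hbot => ?_
  have hB1 : B = {1} := congrArg SetLike.coe hbot
  rw [hB1, Set.ncard_singleton] at h2
  omega

end Socle

section MinBlock

variable {G : Type*} [Group G] {K : Subgroup (Equiv.Perm G)}

theorem isBlock_minBlock : IsBlock K (minBlock K) :=
  IsBlock.sInter fun _ hB => hB.1

theorem one_mem_minBlock : (1 : G) ∈ minBlock K :=
  Set.mem_sInter.2 fun _ hB => hB.2.1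

theorem minBlock_subset {B : Set G} (hB : IsBlock K B) (h1 : (1 : G) ∈ B) (h2 : 2 ≤ B.ncard) :
    minBlock K ⊆ B :=
  Set.sInter_subset_of_mem ⟨hB, h1, h2⟩

variable {L : Subgroup G}

theorem normal_of_eq_minBlock (hGK : starGroup (⊤ : Subgroup G) ≤ K)
    (hL : (L : Set G) = minBlock K) : L.Normal := by
  have hL' : L = isBlock_minBlock.toSubgroup hGK one_mem_minBlock := SetLike.coe_injective hL
  rw [hL']
  exact IsBlock.toSubgroup_normal hGK _ _

theorem socle_le_of_eq_minBlock (hGK : starGroup (⊤ : Subgroup G) ≤ K)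
    (hL : (L : Set G) = minBlock K) {S : Subgroup G} (hSnormal : S.Normal)
    (hSsimple : IsSimpleGroup S) (hScent : ∀ g : G, (∀ s ∈ S, g * s = s * g) → g = 1) :
    S ≤ L := by
  intro s hs
  rw [← SetLike.mem_coe, hL]
  exact Set.mem_sInter.2 fun B hB =>
    hB.1.socle_subset hGK hSnormal hSsimple hScent hB.2.1 hB.2.2 hs

end MinBlock

section Cosets

variable {G : Type*} [Group G] {L : Subgroup G}

theorem mem_rcoset_self (g : G) : g ∈ rcoset L g := by
  simp [rcoset]

theorem rcoset_eq_of_mem {g x : G} (hx : x ∈ rcoset L g) : rcoset L x = rcoset L g := by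
  ext y
  simp only [rcoset, Set.mem_ofPred_eq] at hx ⊢
  constructor
  · intro hy
    simpa [mul_assoc] using L.mul_mem hy hx
  · intro hy
    simpa [mul_assoc] using L.mul_mem hy (L.inv_mem hx)

theorem rcoset_eq_image (g : G) : rcoset L g = Equiv.mulRight g '' L := by
  ext x
  simp [rcoset, Equiv.mulRight]

variable {K : Subgroup (Equiv.Perm G)}

theorem image_rcoset (hGK : starGroup (⊤ : Subgroup G) ≤ K) (hL : (L : Set G) = minBlock K)
    {k : Equiv.Perm G} (hk : k ∈ K) (z : G) : k '' rcoset L z = rcoset L (k z) := by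
  rw [rcoset_eq_image, rcoset_eq_image, ← Set.image_comp, ← Equiv.Perm.coe_mul, hL]
  exact isBlock_minBlock.image_eq_image (x := k z)
    (K.mul_mem hk (mulRight_mem_of_starGroup_le hGK z)) (mulRight_mem_of_starGroup_le hGK _)
    ⟨1, one_mem_minBlock, by simp⟩ ⟨1, one_mem_minBlock, by simp⟩

end Cosets

section StabCosets

variable {G : Type*} [Group G] {K : Subgroup (Equiv.Perm G)} {L : Subgroup G}

theorem apply_mem_rcoset_of_mem_stabCosets {h : Equiv.Perm G} (hh : h ∈ stabCosets K L)
    (x : G) : h x ∈ rcoset L x :=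
  hh.2 x

theorem image_rcoset_of_mem_stabCosets (hGK : starGroup (⊤ : Subgroup G) ≤ K)
    (hL : (L : Set G) = minBlock K) {h : Equiv.Perm G} (hh : h ∈ stabCosets K L) (z : G) :
    h '' rcoset L z = rcoset L z := by
  rw [image_rcoset hGK hL hh.1, rcoset_eq_of_mem (apply_mem_rcoset_of_mem_stabCosets hh z)]

theorem conj_mem_stabCosets (hGK : starGroup (⊤ : Subgroup G) ≤ K)
    (hL : (L : Set G) = minBlock K) {k h : Equiv.Perm G} (hk : k ∈ K)
    (hh : h ∈ stabCosets K L) : k * h * k⁻¹ ∈ stabCosets K L := by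
  refine ⟨K.mul_mem (K.mul_mem hk hh.1) (K.inv_mem hk), fun x => ?_⟩
  show k (h (k⁻¹ x)) ∈ rcoset L x
  have := Set.mem_image_of_mem k (apply_mem_rcoset_of_mem_stabCosets hh (k⁻¹ x))
  rwa [image_rcoset hGK hL hk, ← Equiv.Perm.mul_apply, mul_inv_cancel, Equiv.Perm.one_apply]
    at this

theorem mulLeft_mem_stabCosets (hGK : starGroup (⊤ : Subgroup G) ≤ K) {l : G} (hl : l ∈ L) :
    Equiv.mulLeft l ∈ stabCosets K L :=
  ⟨mulLeft_mem_of_starGroup_le hGK l, fun x => by simpa [rcoset] using hl⟩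

theorem mulRight_mem_stabCosets (hGK : starGroup (⊤ : Subgroup G) ≤ K) [hLn : L.Normal]
    {l : G} (hl : l ∈ L) : Equiv.mulRight l ∈ stabCosets K L :=
  ⟨mulRight_mem_of_starGroup_le hGK l, fun x => by simpa [rcoset, mul_assoc] using hLn.conj_mem l hl x⟩

end StabCosets

section Orbits

variable {G : Type*} [Group G] {K : Subgroup (Equiv.Perm G)} {L : Subgroup G}

def fixingStabCosets (K : Subgroup (Equiv.Perm G)) (L : Subgroup G) (Z : Set G) :
    Subgroup (Equiv.Perm G) :=
  stabCosets K L ⊓ fixingSubgroup (Equiv.Perm G) Z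

theorem mem_fixingStabCosets_iff {Z : Set G} {h : Equiv.Perm G} :
    h ∈ fixingStabCosets K L Z ↔ h ∈ stabCosets K L ∧ ∀ z ∈ Z, h z = z := by
  simp [fixingStabCosets, mem_fixingSubgroup_iff]

theorem conj_mem_fixingStabCosets (hGK : starGroup (⊤ : Subgroup G) ≤ K)
    (hL : (L : Set G) = minBlock K) {Z : Set G} {k h : Equiv.Perm G} (hk : k ∈ K)
    (hh : h ∈ fixingStabCosets K L Z) : k * h * k⁻¹ ∈ fixingStabCosets K L (k '' Z) := by
  rw [mem_fixingStabCosets_iff] at hh ⊢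
  refine ⟨conj_mem_stabCosets hGK hL hk hh.1, ?_⟩
  rintro _ ⟨z, hz, rfl⟩
  simp [hh.2 z hz]

open MulAction

theorem orbit_fixingStabCosets_subset (Z : Set G) (y : G) :
    orbit (fixingStabCosets K L Z) y ⊆ rcoset L y := by
  rintro _ ⟨h, rfl⟩
  exact apply_mem_rcoset_of_mem_stabCosets (mem_fixingStabCosets_iff.1 h.2).1 y

theorem apply_mem_orbit_image (hGK : starGroup (⊤ : Subgroup G) ≤ K)
    (hL : (L : Set G) = minBlock K) {Z : Set G} {k : Equiv.Perm G} (hk : k ∈ K) {x y : G}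
    (hx : x ∈ orbit (fixingStabCosets K L Z) y) :
    k x ∈ orbit (fixingStabCosets K L (k '' Z)) (k y) := by
  obtain ⟨h, rfl⟩ := hx
  exact ⟨⟨k * h * k⁻¹, conj_mem_fixingStabCosets hGK hL hk h.2⟩, by simp [Subgroup.smul_def]⟩

theorem mul_mem_orbit_mul_left (hGK : starGroup (⊤ : Subgroup G) ≤ K)
    (hL : (L : Set G) = minBlock K) {l : G} (hl : l ∈ L) {z x y : G}
    (hx : x ∈ orbit (fixingStabCosets K L (rcoset L z)) y) :
    l * x ∈ orbit (fixingStabCosets K L (rcoset L z)) (l * y) := by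
  have := apply_mem_orbit_image hGK hL (mulLeft_mem_of_starGroup_le hGK l) hx
  rwa [image_rcoset_of_mem_stabCosets hGK hL (mulLeft_mem_stabCosets hGK hl)] at this

theorem mul_mem_orbit_mul_right (hGK : starGroup (⊤ : Subgroup G) ≤ K)
    (hL : (L : Set G) = minBlock K) {l : G} (hl : l ∈ L) {z x y : G}
    (hx : x ∈ orbit (fixingStabCosets K L (rcoset L z)) y) :
    x * l ∈ orbit (fixingStabCosets K L (rcoset L z)) (y * l) := by
  have : L.Normal := normal_of_eq_minBlock hGK hL
  have := apply_mem_orbit_image hGK hL (mulRight_mem_of_starGroup_le hGK l) hx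
  rwa [image_rcoset_of_mem_stabCosets hGK hL (mulRight_mem_stabCosets hGK hl)] at this

theorem mem_of_mul_mem_orbit {Z : Set G} {m b : G}
    (hm : m * b ∈ orbit (fixingStabCosets K L Z) b) : m ∈ L := by
  simpa [rcoset] using orbit_fixingStabCosets_subset Z b hm

/-- Closed under products because left multiplication by elements of `L` permutes the orbits. -/
def orbitSubgroup (hGK : starGroup (⊤ : Subgroup G) ≤ K) (hL : (L : Set G) = minBlock K)
    (z b : G) : Subgroup G where
  carrier := {m | m * b ∈ orbit (fixingStabCosets K L (rcoset L z)) b}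
  one_mem' := by simp
  mul_mem' {m₁ m₂} h₁ h₂ := by
    rw [Set.mem_ofPred, mul_assoc, ← orbit_eq_iff.2 h₁]
    exact mul_mem_orbit_mul_left hGK hL (mem_of_mul_mem_orbit h₁) h₂
  inv_mem' {m} h := by
    simpa using mul_mem_orbit_mul_left hGK hL (L.inv_mem (mem_of_mul_mem_orbit h))
      (mem_orbit_symm.2 h)

theorem conj_mem_orbitSubgroup (hGK : starGroup (⊤ : Subgroup G) ≤ K)
    (hL : (L : Set G) = minBlock K) {z b u m : G} (hu : u ∈ L)
    (hm : m ∈ orbitSubgroup hGK hL z b) : u * m * u⁻¹ ∈ orbitSubgroup hGK hL z b := by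
  have hv : b⁻¹ * u⁻¹ * b ∈ L := by
    simpa using (normal_of_eq_minBlock hGK hL).conj_mem _ (L.inv_mem hu) b⁻¹
  have := mul_mem_orbit_mul_left hGK hL hu (mul_mem_orbit_mul_right hGK hL hv hm)
  simp only [← mul_assoc, mul_inv_cancel_right, mul_inv_cancel, one_mul] at this
  exact this

theorem orbitSubgroup_ne_bot (hGK : starGroup (⊤ : Subgroup G) ≤ K)
    (hL : (L : Set G) = minBlock K) {z b y : G} (hy : y ∈ rcoset L b) {h : Equiv.Perm G}
    (hh : h ∈ fixingStabCosets K L (rcoset L z)) (hhy : h y ≠ y) :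
    orbitSubgroup hGK hL z b ≠ ⊥ := by
  have hl : b * y⁻¹ ∈ L := by simpa using L.inv_mem hy
  have hhy' : h y ∈ orbit (fixingStabCosets K L (rcoset L z)) y :=
    mem_orbit y (⟨h, hh⟩ : fixingStabCosets K L _)
  have hmem : b * y⁻¹ * h y * b⁻¹ ∈ orbitSubgroup hGK hL z b := by
    simpa [orbitSubgroup, mul_assoc] using mul_mem_orbit_mul_left hGK hL hl hhy'
  intro hbot
  have := (Subgroup.eq_bot_iff_forall _).1 hbot _ hmem
  rw [mul_inv_eq_one, mul_assoc, mul_eq_left, inv_mul_eq_one] at this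
  exact hhy this.symm

def movingCosets (K : Subgroup (Equiv.Perm G)) (L : Subgroup G) (Y : Set G) : Set (Set G) :=
  {Z | (∃ z, Z = rcoset L z) ∧ ∃ h ∈ fixingStabCosets K L Z, ¬ ∀ y ∈ Y, h y = y}

theorem image_mem_movingCosets (hGK : starGroup (⊤ : Subgroup G) ≤ K)
    (hL : (L : Set G) = minBlock K) {Y Z : Set G} {k : Equiv.Perm G} (hk : k ∈ K)
    (hkY : k '' Y = Y) (hZ : Z ∈ movingCosets K L Y) : k '' Z ∈ movingCosets K L Y := by
  obtain ⟨⟨z, rfl⟩, h, hh, hmove⟩ := hZ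
  refine ⟨⟨k z, image_rcoset hGK hL hk z⟩, k * h * k⁻¹, conj_mem_fixingStabCosets hGK hL hk hh,
    fun hfix => hmove fun y hy => k.injective ?_⟩
  simpa using hfix (k y) (hkY ▸ Set.mem_image_of_mem k hy)

theorem mul_mem_orbit_of_mem_socle (hGK : starGroup (⊤ : Subgroup G) ≤ K)
    (hL : (L : Set G) = minBlock K) {S : Subgroup G} (hSnormal : S.Normal)
    (hSsimple : IsSimpleGroup S) (hScent : ∀ g : G, (∀ s ∈ S, g * s = s * g) → g = 1)
    {b : G} {Z : Set G} (hZ : Z ∈ movingCosets K L (rcoset L b)) {s : G} (hs : s ∈ S) :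
    s * b ∈ orbit (fixingStabCosets K L Z) b := by
  obtain ⟨⟨z, rfl⟩, h, hh, hmove⟩ := hZ
  obtain ⟨y, hy, hhy⟩ := not_forall₂.1 hmove
  exact le_of_conj_mem_of_ne_bot hSnormal hSsimple hScent
    (fun u hu m hm => conj_mem_orbitSubgroup hGK hL
      (socle_le_of_eq_minBlock hGK hL hSnormal hSsimple hScent hu) hm)
    (orbitSubgroup_ne_bot hGK hL hy hh hhy) hs

end Orbits

section CommonOrbit

variable {G : Type*} [Group G] {K : Subgroup (Equiv.Perm G)} {L : Subgroup G}

open MulAction (orbit orbit_eq_iff mem_orbit_self)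

def commonOrbit (K : Subgroup (Equiv.Perm G)) (L : Subgroup G) (b : G) : Set G :=
  {x ∈ rcoset L b | ∀ Z ∈ movingCosets K L (rcoset L b), x ∈ orbit (fixingStabCosets K L Z) b}

theorem image_commonOrbit_subset (hGK : starGroup (⊤ : Subgroup G) ≤ K)
    (hL : (L : Set G) = minBlock K) {b d : G} {k : Equiv.Perm G} (hk : k ∈ K)
    (hd : d ∈ commonOrbit K L b) (hkd : k d ∈ commonOrbit K L b) :
    k '' commonOrbit K L b ⊆ commonOrbit K L b := by
  have hkY : k '' rcoset L b = rcoset L b := by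
    rw [← rcoset_eq_of_mem hd.1, image_rcoset hGK hL hk, rcoset_eq_of_mem hkd.1,
      rcoset_eq_of_mem hd.1]
  have hkY' : (k⁻¹ : Equiv.Perm G) '' rcoset L b = rcoset L b := by
    nth_rw 1 [← hkY]
    exact k.symm_image_image _
  rintro _ ⟨x, hx, rfl⟩
  refine ⟨hkY ▸ Set.mem_image_of_mem k hx.1, fun Z hZ => ?_⟩
  have hZ' := image_mem_movingCosets hGK hL (K.inv_mem hk) hkY' hZ
  have hxd : x ∈ orbit (fixingStabCosets K L ((k⁻¹ : Equiv.Perm G) '' Z)) d := by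
    rw [orbit_eq_iff.2 (hd.2 _ hZ')]
    exact hx.2 _ hZ'
  have hkZ : k '' ((k⁻¹ : Equiv.Perm G) '' Z) = Z := k.image_symm_image Z
  have := apply_mem_orbit_image hGK hL hk hxd
  rwa [hkZ, orbit_eq_iff.2 (hkd.2 Z hZ)] at this

theorem isBlock_commonOrbit (hGK : starGroup (⊤ : Subgroup G) ≤ K)
    (hL : (L : Set G) = minBlock K) (b : G) : IsBlock K (commonOrbit K L b) := by
  intro k hk
  refine or_iff_not_imp_right.2 fun hne => ?_
  obtain ⟨_, ⟨d, hd, rfl⟩, hkd⟩ := Set.nonempty_iff_ne_empty.2 hne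
  refine (image_commonOrbit_subset hGK hL hk hd hkd).antisymm fun x hx => ⟨k⁻¹ x, ?_, by simp⟩
  exact image_commonOrbit_subset hGK hL (K.inv_mem hk) hkd (by simpa using hd) ⟨x, hx, rfl⟩

theorem rcoset_subset_commonOrbit [Finite G] (hGK : starGroup (⊤ : Subgroup G) ≤ K)
    (hL : (L : Set G) = minBlock K) {S : Subgroup G} (hSnormal : S.Normal)
    (hSsimple : IsSimpleGroup S) (hScent : ∀ g : G, (∀ s ∈ S, g * s = s * g) → g = 1)
    (b : G) : rcoset L b ⊆ commonOrbit K L b := by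
  have hSL := socle_le_of_eq_minBlock hGK hL hSnormal hSsimple hScent
  have hbD : b ∈ commonOrbit K L b := ⟨mem_rcoset_self b, fun _ _ => mem_orbit_self b⟩
  obtain ⟨⟨s, hs⟩, hs1⟩ := exists_ne (1 : S)
  have hsD : s * b ∈ commonOrbit K L b :=
    ⟨by simpa [rcoset] using hSL hs,
      fun _ hZ => mul_mem_orbit_of_mem_socle hGK hL hSnormal hSsimple hScent hZ hs⟩
  set B := Equiv.mulRight b⁻¹ '' commonOrbit K L b
  have hB : IsBlock K B :=
    (isBlock_commonOrbit hGK hL b).image (mulRight_mem_of_starGroup_le hGK b⁻¹)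
  have h1 : (1 : G) ∈ B := ⟨b, hbD, by simp⟩
  have h2 : 2 ≤ B.ncard := (Set.one_lt_ncard_iff (Set.toFinite B)).2
    ⟨1, s, h1, ⟨s * b, hsD, by simp⟩, fun h => hs1 (Subtype.ext h.symm)⟩
  intro x hx
  obtain ⟨y, hy, hyx⟩ := (hL ▸ minBlock_subset hB h1 h2 : (L : Set G) ⊆ B) hx
  simpa [mul_right_cancel hyx] using hy

end CommonOrbit

section Transitivity

variable {G : Type*} [Group G] {K : Subgroup (Equiv.Perm G)} {L : Subgroup G}

theorem exists_mem_stabCosets_apply_eq_apply_eq [Finite G]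
    (hGK : starGroup (⊤ : Subgroup G) ≤ K) (hL : (L : Set G) = minBlock K) {S : Subgroup G}
    (hSnormal : S.Normal) (hSsimple : IsSimpleGroup S)
    (hScent : ∀ g : G, (∀ s ∈ S, g * s = s * g) → g = 1) {g g' : G}
    (hX : rcoset L g ∈ movingCosets K L (rcoset L g')) {a c b d : G} (ha : a ∈ rcoset L g)
    (hc : c ∈ rcoset L g) (hb : b ∈ rcoset L g') (hd : d ∈ rcoset L g') :
    ∃ k ∈ stabCosets K L, k a = c ∧ k b = d := by
  have hl : c * a⁻¹ ∈ L := by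
    have hca : c ∈ rcoset L a := (rcoset_eq_of_mem ha).symm ▸ hc
    simpa [rcoset] using hca
  have hY : rcoset L (c * a⁻¹ * b) = rcoset L g' :=
    (rcoset_eq_of_mem (by simpa [rcoset, mul_assoc] using hl)).trans (rcoset_eq_of_mem hb)
  rw [← hY] at hX hd
  obtain ⟨⟨h, hh⟩, rfl⟩ :=
    (rcoset_subset_commonOrbit hGK hL hSnormal hSsimple hScent _ hd).2 _ hX
  obtain ⟨hhL, hfix⟩ := mem_fixingStabCosets_iff.1 hh
  refine ⟨h * Equiv.mulLeft (c * a⁻¹), (stabCosets K L).mul_mem hhL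
    (mulLeft_mem_stabCosets hGK hl), ?_, ?_⟩
  · simpa using hfix c hc
  · simp [Subgroup.smul_def, mul_assoc]

end Transitivity

theorem stabCosets_transitive_on_product_general (G : Type*) [Group G] [Fintype G]
    (S : Subgroup G) (hSnormal : S.Normal) (hSsimple : IsSimpleGroup S)
    (hScent : ∀ g : G, (∀ s ∈ S, g * s = s * g) → g = 1)
    (K : Subgroup (Equiv.Perm G)) (hGK : starGroup (⊤ : Subgroup G) ≤ K)
    (L : Subgroup G) (hL : (L : Set G) = minBlock K) (g g' : G)
    (hne : ∃ f ∈ stabCosets K L,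
      ((∀ x ∈ rcoset L g, (f : Equiv.Perm G) x = x) ∧
        ¬ (∀ x ∈ rcoset L g', (f : Equiv.Perm G) x = x)) ∨
      ((∀ x ∈ rcoset L g', (f : Equiv.Perm G) x = x) ∧
        ¬ (∀ x ∈ rcoset L g, (f : Equiv.Perm G) x = x))) :
    ∀ a ∈ rcoset L g, ∀ c ∈ rcoset L g, ∀ b ∈ rcoset L g', ∀ d ∈ rcoset L g',
      ∃ k ∈ stabCosets K L, (k : Equiv.Perm G) a = c ∧ (k : Equiv.Perm G) b = d := by
  intro a ha c hc b hb d hd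
  obtain ⟨f, hf, ⟨hfix, hmove⟩ | ⟨hfix, hmove⟩⟩ := hne
  · exact exists_mem_stabCosets_apply_eq_apply_eq hGK hL hSnormal hSsimple hScent
      ⟨⟨g, rfl⟩, f, mem_fixingStabCosets_iff.2 ⟨hf, hfix⟩, hmove⟩ ha hc hb hd
  · obtain ⟨k, hk, hkb, hka⟩ := exists_mem_stabCosets_apply_eq_apply_eq hGK hL hSnormal
      hSsimple hScent ⟨⟨g', rfl⟩, f, mem_fixingStabCosets_iff.2 ⟨hf, hfix⟩, hmove⟩ hb hd ha hc
    exact ⟨k, hk, hka, hkb⟩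

/-- if two right cosets of the minimal block `L` are not equivalent, then
`K_𝔏` acts transitively on their Cartesian product. -/
theorem stabCosets_transitive_on_product (G : Type*) [Group G] [Fintype G]
    (S : Subgroup G) (hSnormal : S.Normal) (hSsimple : IsSimpleGroup S)
    (hSnonabelian : ¬ ∀ a b : S, a * b = b * a)
    (hScent : ∀ g : G, (∀ s ∈ S, g * s = s * g) → g = 1)
    (K : Subgroup (Equiv.Perm G)) (hGK : starGroup (⊤ : Subgroup G) ≤ K)
    (L : Subgroup G) (hL : (L : Set G) = minBlock K) (g g' : G)
    (hne : ∃ f ∈ stabCosets K L,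
      ((∀ x ∈ rcoset L g, (f : Equiv.Perm G) x = x) ∧
        ¬ (∀ x ∈ rcoset L g', (f : Equiv.Perm G) x = x)) ∨
      ((∀ x ∈ rcoset L g', (f : Equiv.Perm G) x = x) ∧
        ¬ (∀ x ∈ rcoset L g, (f : Equiv.Perm G) x = x))) :
    ∀ a ∈ rcoset L g, ∀ c ∈ rcoset L g, ∀ b ∈ rcoset L g', ∀ d ∈ rcoset L g',
      ∃ k ∈ stabCosets K L, (k : Equiv.Perm G) a = c ∧ (k : Equiv.Perm G) b = d :=
  stabCosets_transitive_on_product_general G S hSnormal hSsimple hScent K hGK L hL g g' hne
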